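/- For positive integers i, x, m with x ≤ i ≤ m and real θ > 0, the identity Σ_{n=x}^{i} C(i,n)·(-1)^n·(θ+n)^{(i-1)}·C(n,x)/(θ+n)^{(m)} = (i!·(-1)^x / ((i-x)!·x!·(m-i)!)) · Γ(m-x+1)·Γ(θ+x+i-1)/Γ(θ+i+m) holds, where y^{(k)} denotes the rising factorial and Γ is the gamma function. -/

import Mathlib

open Finset

/-- Rising factorial `a^{(k)} = a(a+1)⋯(a+k-1)`. -/
noncomputable def rise (a : ℝ) (k : ℕ) : ℝ := ∏ i ∈ Finset.range k, (a + i)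

/-- Falling factorial `a^{[k]} = a(a-1)⋯(a-k+1)`. -/
noncomputable def fall (a : ℝ) (k : ℕ) : ℝ := ∏ i ∈ Finset.range k, (a - i)

/-!
Write `n = x + k`, `K = i - x`, `L = m - i + 1` and `a = θ + x + i - 1`. Cancelling
`(θ + n)^{(i-1)}` against `(θ + n)^{(m)}` leaves `1 / (a + k)^{(L)}`; multiplying by
`a^{(K+L)}` turns the alternating sum into `Σ_k C(K, k) (-1)^k a^{(k)} (a + L + k)^{(K-k)}`,
which is `L^{(K)}` by the Chu–Vandermonde identity for falling factorials. By
`Γ(a + k) = a^{(k)} Γ(a)`, the Gamma quotient on the right is `L^{(K)} (m - i)! / a^{(K+L)}`.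
-/

lemma rise_add (a : ℝ) (p q : ℕ) : rise a (p + q) = rise a p * rise (a + p) q := by
  simp only [rise, prod_range_add, Nat.cast_add, add_assoc]

lemma rise_succ (a : ℝ) (k : ℕ) : rise a (k + 1) = rise a k * (a + k) :=
  prod_range_succ _ _

lemma rise_pos {a : ℝ} (ha : 0 < a) (k : ℕ) : 0 < rise a k :=
  prod_pos fun j _ => by positivity

lemma rise_div_rise_add (a : ℝ) (p q : ℕ) (h : rise a p ≠ 0) :
    rise a p / rise a (p + q) = (rise (a + p) q)⁻¹ := by
  rw [rise_add, div_mul_cancel_left₀ h]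

lemma rise_eq_fall (a : ℝ) (k : ℕ) : rise a k = fall (a + k - 1) k := by
  rw [rise, fall, ← prod_range_reflect]
  refine prod_congr rfl fun j hj => ?_
  have hjk := mem_range.mp hj
  rw [Nat.cast_sub (by omega : j ≤ k - 1), Nat.cast_sub (by omega : 1 ≤ k)]
  ring

lemma neg_one_pow_mul_rise (a : ℝ) (k : ℕ) : (-1) ^ k * rise a k = fall (-a) k := by
  rw [rise, fall, ← card_range k, ← prod_const, card_range, ← prod_mul_distrib]
  exact prod_congr rfl fun j _ => by ring

open Polynomial in
lemma fall_eq_smeval_descPochhammer (a : ℝ) (k : ℕ) :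
    fall a k = (descPochhammer ℤ k).smeval a := by
  rw [fall, ← descPochhammer_eval_eq_prod_range, ← descPochhammer_map (algebraMap ℤ ℝ),
    eval_map_algebraMap, aeval_eq_smeval]

lemma fall_add (r s : ℝ) (K : ℕ) :
    fall (r + s) K = ∑ k ∈ range (K + 1), (K.choose k : ℝ) * (fall r k * fall s (K - k)) := by
  simp only [fall_eq_smeval_descPochhammer]
  rw [Ring.descPochhammer_smeval_add K (Commute.all r s),
    Nat.sum_antidiagonal_eq_sum_range_succ (fun p q => (K.choose p : ℝ) *
      ((descPochhammer ℤ p).smeval r * (descPochhammer ℤ q).smeval s))]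

/-- Chu–Vandermonde in disguise: `(-1)^k a^{(k)} = (-a)^{[k]}` and
`(b + k)^{(K-k)} = (b + K - 1)^{[K-k]}`. -/
lemma sum_choose_mul_neg_one_pow_mul_rise_mul_rise (a b : ℝ) (K : ℕ) :
    ∑ k ∈ range (K + 1), (K.choose k : ℝ) * ((-1) ^ k * rise a k * rise (b + k) (K - k))
      = rise (b - a) K := by
  rw [rise_eq_fall, show b - a + K - 1 = -a + (b + K - 1) by ring, fall_add]
  refine sum_congr rfl fun k hk => ?_
  have hkK : k ≤ K := Nat.lt_succ_iff.mp (mem_range.mp hk)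
  rw [neg_one_pow_mul_rise, rise_eq_fall, Nat.cast_sub hkK]
  ring_nf

lemma sum_choose_mul_neg_one_pow_div_rise (a : ℝ) (K L : ℕ) (h : rise a (K + L) ≠ 0) :
    ∑ k ∈ range (K + 1), (K.choose k : ℝ) * (-1) ^ k / rise (a + k) L
      = rise L K / rise a (K + L) := by
  rw [← add_sub_cancel_left a L, ← sum_choose_mul_neg_one_pow_mul_rise_mul_rise a (a + L) K,
    sum_div]
  refine sum_congr rfl fun k hk => ?_
  have hkK : k ≤ K := Nat.lt_succ_iff.mp (mem_range.mp hk)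
  have hsplit : rise a (K + L) = rise a k * (rise (a + k) L * rise (a + L + k) (K - k)) := by
    rw [show K + L = k + (L + (K - k)) by omega, rise_add, rise_add, add_right_comm a (k : ℝ)]
  rw [hsplit] at h ⊢
  rw [mul_ne_zero_iff, mul_ne_zero_iff] at h
  obtain ⟨h₁, h₂, h₃⟩ := h
  field_simp

lemma Gamma_add_nat_eq_rise_mul (a : ℝ) (ha : ∀ j : ℕ, a + j ≠ 0) (k : ℕ) :
    Real.Gamma (a + k) = rise a k * Real.Gamma a := by
  induction k with
  | zero => simp [rise]
  | succ k ih =>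
    rw [Nat.cast_succ, ← add_assoc, Real.Gamma_add_one (ha k), ih, rise_succ]
    ring

lemma sum_Icc_choose_mul_rise_div_rise (θ : ℝ) (hθ : 0 < θ) (i x m : ℕ) (hi : 0 < i)
    (hxi : x ≤ i) (him : i ≤ m) :
    ∑ n ∈ Icc x i, (i.choose n : ℝ) * (-1) ^ n * rise (θ + n) (i - 1) * (n.choose x)
        / rise (θ + n) m
      = i.choose x * (-1) ^ x * ∑ k ∈ range (i - x + 1),
          ((i - x).choose k : ℝ) * (-1) ^ k / rise (θ + x + i - 1 + k) (m - i + 1) := by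
  rw [← Ico_add_one_right_eq_Icc, sum_Ico_eq_sum_range, show i + 1 - x = i - x + 1 by omega,
    mul_sum]
  refine sum_congr rfl fun k _ => ?_
  have hchoose : (i.choose (x + k) : ℝ) * ((x + k).choose x) = i.choose x * (i - x).choose k := by
    have := Nat.choose_mul (n := i) (Nat.le_add_right x k)
    rw [add_tsub_cancel_left] at this
    exact_mod_cast this
  have hrise : rise (θ + (x + k : ℕ)) (i - 1) / rise (θ + (x + k : ℕ)) m
      = (rise (θ + x + i - 1 + k) (m - i + 1))⁻¹ := by
    rw [show rise (θ + (x + k : ℕ)) m = rise (θ + (x + k : ℕ)) ((i - 1) + (m - i + 1)) by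
        congr 1; omega,
      rise_div_rise_add _ _ _ (rise_pos (by positivity) _).ne', Nat.cast_sub hi]
    push_cast
    ring_nf
  calc _ = (i.choose (x + k) : ℝ) * ((x + k).choose x) * (-1) ^ (x + k)
          * (rise (θ + (x + k : ℕ)) (i - 1) / rise (θ + (x + k : ℕ)) m) := by ring
    _ = _ := by rw [hchoose, hrise, pow_add]; ring

theorem stmt_4_general (i x m : ℕ) (hi : 0 < i)
    (hxi : x ≤ i) (him : i ≤ m) (θ : ℝ) (hθ : 0 < θ) :
    ∑ n ∈ Finset.Icc x i,
      (i.choose n : ℝ) * (-1 : ℝ) ^ n * rise (θ + n) (i - 1) * (n.choose x)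
        / rise (θ + n) m
    = (i.factorial : ℝ) * (-1 : ℝ) ^ x
        / ((i - x).factorial * x.factorial * (m - i).factorial)
        * (Real.Gamma ((m : ℝ) - x + 1) * Real.Gamma (θ + x + i - 1)
            / Real.Gamma (θ + i + m)) := by
  have ha : 0 < θ + x + i - 1 := by
    have : (1 : ℝ) ≤ i := by exact_mod_cast hi
    have : (0 : ℝ) ≤ x := x.cast_nonneg
    linarith
  have hΓnum : Real.Gamma ((m : ℝ) - x + 1)
      = rise (m - i + 1 : ℕ) (i - x) * (m - i).factorial := by
    rw [← Real.Gamma_nat_eq_factorial, ← Nat.cast_succ,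
      ← Gamma_add_nat_eq_rise_mul _ fun j => by positivity]
    push_cast [Nat.cast_sub hxi, Nat.cast_sub him]
    ring_nf
  have hΓden : Real.Gamma (θ + i + m)
      = rise (θ + x + i - 1) (i - x + (m - i + 1)) * Real.Gamma (θ + x + i - 1) := by
    rw [← Gamma_add_nat_eq_rise_mul _ fun j => by positivity]
    push_cast [Nat.cast_sub hxi, Nat.cast_sub him]
    ring_nf
  rw [sum_Icc_choose_mul_rise_div_rise θ hθ i x m hi hxi him,
    sum_choose_mul_neg_one_pow_div_rise _ _ _ (rise_pos ha _).ne', hΓnum, hΓden,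
    ← Nat.choose_mul_factorial_mul_factorial hxi]
  have := (Real.Gamma_pos_of_pos ha).ne'
  have := (rise_pos ha (i - x + (m - i + 1))).ne'
  push_cast
  field_simp

theorem stmt_4 (i x m : ℕ) (hi : 0 < i) (hx0 : 0 < x) (hm0 : 0 < m)
    (hxi : x ≤ i) (him : i ≤ m) (θ : ℝ) (hθ : 0 < θ) :
    ∑ n ∈ Finset.Icc x i,
      (i.choose n : ℝ) * (-1 : ℝ) ^ n * rise (θ + n) (i - 1) * (n.choose x)
        / rise (θ + n) m
    = (i.factorial : ℝ) * (-1 : ℝ) ^ x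
        / ((i - x).factorial * x.factorial * (m - i).factorial)
        * (Real.Gamma ((m : ℝ) - x + 1) * Real.Gamma (θ + x + i - 1)
            / Real.Gamma (θ + i + m)) :=
  stmt_4_general i x m hi hxi him θ hθ
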